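/- For a 2π-periodic function h with r-th derivative in L¹, the error of the trapezoidal rule with M equidistant nodes satisfies |(2π/M)Σ_{m=0}^{M-1} h(2πm/M) − ∫₀^{2π} h(s) ds| ≤ C(r) M^{-r} ‖h^{(r)}‖_{L¹(0,2π)}. -/

import Mathlib

/-!
Integrating by parts on a cell `[t, t + Δ]` of the grid writes the local error
`Δ • f t - ∫ f` of the left-endpoint rule as `∫ Δ ^ k K ((x - t) / Δ) • f⁽ᵏ⁾ x`, where each
kernel `K` is a mean-free antiderivative of the previous one, vanishing at `0` and `1`. Removing
the mean costs a multiple of `∫ f⁽ᵏ⁾` over the cell; summed over all cells this is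
`∫₀ᵀ f⁽ᵏ⁾ = 0` by periodicity. After `r` steps, bounding the last kernel on `[0, 1]` gives the
factor `(T / M) ^ r`.
-/

open intervalIntegral Set

section Periodic

variable {E : Type*} [NormedAddCommGroup E] [NormedSpace ℝ E]

theorem ContDiff.hasDerivAt_iteratedDeriv {f : ℝ → E} {n : ℕ} (hf : ContDiff ℝ (n + 1) f)
    (x : ℝ) : HasDerivAt (iteratedDeriv n f) (iteratedDeriv (n + 1) f x) x := by
  rw [iteratedDeriv_succ]
  exact (hf.differentiable_iteratedDeriv n (by exact_mod_cast n.lt_succ_self) x).hasDerivAt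

theorem Function.Periodic.iteratedDeriv {f : ℝ → E} {T : ℝ} (hf : Function.Periodic f T)
    (n : ℕ) : Function.Periodic (iteratedDeriv n f) T := fun x => by
  simpa only [hf.funext] using (congrFun (iteratedDeriv_comp_add_const n f T) x).symm

theorem integral_iteratedDeriv_succ_eq_zero_of_periodic [CompleteSpace E] {f : ℝ → E} {T : ℝ}
    (hf : Function.Periodic f T) {n : ℕ} (hfc : ContDiff ℝ (n + 1) f) :
    ∫ x in (0 : ℝ)..T, iteratedDeriv (n + 1) f x = 0 := by
  rw [integral_eq_sub_of_hasDerivAt (fun x _ => hfc.hasDerivAt_iteratedDeriv x)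
    ((hfc.continuous_iteratedDeriv _ le_rfl).intervalIntegrable _ _)]
  simpa using sub_eq_zero.2 (hf.iteratedDeriv n 0)

end Periodic

-- Indexed so that `peanoKernel n` is paired with the `(n + 1)`-st derivative.
noncomputable def peanoKernel : ℕ → ℝ → ℝ
  | 0 => fun y => y - 1
  | n + 1 => fun y => ∫ t in (0 : ℝ)..y, ((∫ s in (0 : ℝ)..1, peanoKernel n s) - peanoKernel n t)

theorem continuous_peanoKernel : ∀ n, Continuous (peanoKernel n)
  | 0 => continuous_id.sub continuous_const
  | n + 1 => continuous_primitive
      (fun _ _ => (continuous_const.sub (continuous_peanoKernel n)).intervalIntegrable _ _) 0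

theorem hasDerivAt_peanoKernel_succ (n : ℕ) (y : ℝ) :
    HasDerivAt (peanoKernel (n + 1)) ((∫ s in (0 : ℝ)..1, peanoKernel n s) - peanoKernel n y) y :=
  ((continuous_const.sub (continuous_peanoKernel n)).integral_hasStrictDerivAt 0 y).hasDerivAt

theorem peanoKernel_succ_zero (n : ℕ) : peanoKernel (n + 1) 0 = 0 :=
  integral_same

theorem peanoKernel_succ_one (n : ℕ) : peanoKernel (n + 1) 1 = 0 := by
  simp only [peanoKernel]
  rw [integral_sub intervalIntegrable_const ((continuous_peanoKernel n).intervalIntegrable 0 1)]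
  simp

section Cell

variable {E : Type*} [NormedAddCommGroup E] [NormedSpace ℝ E] [CompleteSpace E]
  {f f' : ℝ → E} {a Δ : ℝ}

theorem smul_sub_integral_eq_integral_peanoKernel_zero (hf : ∀ x, HasDerivAt f (f' x) x)
    (hf' : Continuous f') (hΔ : Δ ≠ 0) :
    Δ • f a - ∫ x in a..a + Δ, f x = ∫ x in a..a + Δ, (Δ * peanoKernel 0 ((x - a) / Δ)) • f' x := by
  have hkernel : ∀ x, Δ * peanoKernel 0 ((x - a) / Δ) = x - (a + Δ) := fun x => by
    simp only [peanoKernel]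
    field_simp
    ring
  simp_rw [hkernel]
  rw [integral_smul_deriv_eq_deriv_smul (u' := fun _ => 1)
    (fun x _ => (hasDerivAt_id' x).sub_const (a + Δ)) (fun x _ => hf x)
    intervalIntegrable_const (hf'.intervalIntegrable _ _)]
  simp

theorem integral_peanoKernel_smul_eq_succ (n : ℕ) (hf : ∀ x, HasDerivAt f (f' x) x)
    (hf' : Continuous f') (hΔ : Δ ≠ 0) :
    ∫ x in a..a + Δ, (Δ ^ (n + 1) * peanoKernel n ((x - a) / Δ)) • f x =
      (Δ ^ (n + 1) * ∫ s in (0 : ℝ)..1, peanoKernel n s) • (∫ x in a..a + Δ, f x) +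
        ∫ x in a..a + Δ, (Δ ^ (n + 2) * peanoKernel (n + 1) ((x - a) / Δ)) • f' x := by
  set μ := ∫ s in (0 : ℝ)..1, peanoKernel n s
  have hK := continuous_peanoKernel n
  have hfc : Continuous f := continuous_iff_continuousAt.2 fun x => (hf x).continuousAt
  have hu : ∀ x, HasDerivAt (fun x => Δ ^ (n + 2) * peanoKernel (n + 1) ((x - a) / Δ))
      (Δ ^ (n + 1) * (μ - peanoKernel n ((x - a) / Δ))) x := fun x => by
    have hinner : HasDerivAt (fun x => (x - a) / Δ) Δ⁻¹ x := by
      simpa using ((hasDerivAt_id' x).sub_const a).div_const Δ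
    refine (((hasDerivAt_peanoKernel_succ n _).comp x hinner).const_mul _).congr_deriv ?_
    field_simp
    ring
  rw [integral_smul_deriv_eq_deriv_smul (fun x _ => hu x) (fun x _ => hf x)
    ((continuous_const.mul (continuous_const.sub (hK.comp (by fun_prop)))).intervalIntegrable _ _)
    (hf'.intervalIntegrable _ _)]
  simp only [add_sub_cancel_left, div_self hΔ, sub_self, zero_div, peanoKernel_succ_zero,
    peanoKernel_succ_one, mul_zero, zero_smul, zero_sub]
  simp only [mul_sub, sub_smul]
  rw [intervalIntegral.integral_sub, intervalIntegral.integral_smul]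
  · abel
  · exact (continuous_const.smul hfc).intervalIntegrable _ _
  · exact ((continuous_const.mul (hK.comp (by fun_prop))).smul hfc).intervalIntegrable _ _

end Cell

noncomputable def gridNode (T : ℝ) (M m : ℕ) : ℝ := T * m / M

theorem gridNode_zero (T : ℝ) (M : ℕ) : gridNode T M 0 = 0 := by
  simp [gridNode]

theorem gridNode_self (T : ℝ) {M : ℕ} (hM : M ≠ 0) : gridNode T M M = T :=
  mul_div_cancel_right₀ T (Nat.cast_ne_zero.2 hM)

theorem gridNode_succ (T : ℝ) (M m : ℕ) : gridNode T M (m + 1) = gridNode T M m + T / M := by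
  simp only [gridNode]
  push_cast
  ring

section Grid

variable {E : Type*} [NormedAddCommGroup E] [NormedSpace ℝ E] {f f' : ℝ → E} {T : ℝ} {M : ℕ}

theorem sum_integral_gridCell (hf : Continuous f) (hM : M ≠ 0) :
    ∑ m ∈ Finset.range M, ∫ x in gridNode T M m..gridNode T M m + T / M, f x =
      ∫ x in (0 : ℝ)..T, f x := by
  simp_rw [← gridNode_succ]
  rw [sum_integral_adjacent_intervals fun _ _ => hf.intervalIntegrable _ _, gridNode_zero,
    gridNode_self T hM]

noncomputable def peanoRemainder (n : ℕ) (T : ℝ) (M : ℕ) (g : ℝ → E) : E :=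
  ∑ m ∈ Finset.range M, ∫ x in gridNode T M m..gridNode T M m + T / M,
    ((T / M) ^ (n + 1) * peanoKernel n ((x - gridNode T M m) / (T / M))) • g x

theorem leftRiemannSum_sub_integral_eq_peanoRemainder_zero [CompleteSpace E]
    (hf : ∀ x, HasDerivAt f (f' x) x) (hf' : Continuous f') (hT : T ≠ 0) (hM : M ≠ 0) :
    (T / M) • ∑ m ∈ Finset.range M, f (gridNode T M m) - ∫ x in (0 : ℝ)..T, f x =
      peanoRemainder 0 T M f' := by
  have hfc : Continuous f := continuous_iff_continuousAt.2 fun x => (hf x).continuousAt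
  have hΔ : T / M ≠ 0 := div_ne_zero hT (Nat.cast_ne_zero.2 hM)
  rw [Finset.smul_sum, ← sum_integral_gridCell hfc hM, ← Finset.sum_sub_distrib]
  exact Finset.sum_congr rfl fun m _ => by
    simpa using smul_sub_integral_eq_integral_peanoKernel_zero hf hf' hΔ

theorem peanoRemainder_succ [CompleteSpace E] (n : ℕ) (hf : ∀ x, HasDerivAt f (f' x) x)
    (hf' : Continuous f') (hT : T ≠ 0) (hM : M ≠ 0) (hmean : ∫ x in (0 : ℝ)..T, f x = 0) :
    peanoRemainder n T M f = peanoRemainder (n + 1) T M f' := by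
  have hfc : Continuous f := continuous_iff_continuousAt.2 fun x => (hf x).continuousAt
  have hΔ : T / M ≠ 0 := div_ne_zero hT (Nat.cast_ne_zero.2 hM)
  simp only [peanoRemainder, integral_peanoKernel_smul_eq_succ n hf hf' hΔ]
  rw [Finset.sum_add_distrib, ← Finset.smul_sum, sum_integral_gridCell hfc hM, hmean, smul_zero,
    zero_add]

theorem leftRiemannSum_sub_integral_eq_peanoRemainder [CompleteSpace E] {n : ℕ}
    (hf : Function.Periodic f T) (hfc : ContDiff ℝ (n + 1) f) (hT : T ≠ 0) (hM : M ≠ 0) :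
    (T / M) • ∑ m ∈ Finset.range M, f (gridNode T M m) - ∫ x in (0 : ℝ)..T, f x =
      peanoRemainder n T M (iteratedDeriv (n + 1) f) := by
  induction n with
  | zero =>
    rw [iteratedDeriv_one]
    exact leftRiemannSum_sub_integral_eq_peanoRemainder_zero
      (fun x => (hfc.differentiable one_ne_zero x).hasDerivAt) (hfc.continuous_deriv le_rfl) hT hM
  | succ n ih =>
    have hfc' : ContDiff ℝ (n + 1) f := hfc.of_le (by exact_mod_cast (n + 1).le_succ)
    rw [ih hfc']
    exact peanoRemainder_succ n hfc.hasDerivAt_iteratedDeriv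
      (hfc.continuous_iteratedDeriv _ le_rfl) hT hM
      (integral_iteratedDeriv_succ_eq_zero_of_periodic hf hfc')

theorem norm_peanoRemainder_le {n : ℕ} {g : ℝ → E} {B : ℝ} (hg : Continuous g) (hT : 0 < T)
    (hM : M ≠ 0) (hB : ∀ y ∈ Icc (0 : ℝ) 1, ‖peanoKernel n y‖ ≤ B) :
    ‖peanoRemainder n T M g‖ ≤ (T / M) ^ (n + 1) * B * ∫ x in (0 : ℝ)..T, ‖g x‖ := by
  have hΔ : 0 < T / M := div_pos hT (Nat.cast_pos.2 (Nat.pos_of_ne_zero hM))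
  have hcell : ∀ m ∈ Finset.range M,
      ‖∫ x in gridNode T M m..gridNode T M m + T / M,
        ((T / M) ^ (n + 1) * peanoKernel n ((x - gridNode T M m) / (T / M))) • g x‖ ≤
      ∫ x in gridNode T M m..gridNode T M m + T / M, (T / M) ^ (n + 1) * B * ‖g x‖ := by
    intro m _
    refine norm_integral_le_of_norm_le (by linarith) (Filter.Eventually.of_forall fun x hx => ?_)
      ((continuous_const.mul hg.norm).intervalIntegrable _ _)
    have hy : (x - gridNode T M m) / (T / M) ∈ Icc (0 : ℝ) 1 :=
      ⟨div_nonneg (by linarith [hx.1]) hΔ.le, (div_le_one hΔ).2 (by linarith [hx.2])⟩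
    rw [norm_smul, norm_mul, norm_pow, Real.norm_of_nonneg hΔ.le]
    gcongr
    exact hB _ hy
  calc ‖peanoRemainder n T M g‖
      ≤ ∑ m ∈ Finset.range M, ∫ x in gridNode T M m..gridNode T M m + T / M,
          (T / M) ^ (n + 1) * B * ‖g x‖ :=
        (norm_sum_le _ _).trans (Finset.sum_le_sum hcell)
    _ = (T / M) ^ (n + 1) * B * ∫ x in (0 : ℝ)..T, ‖g x‖ := by
        simp only [intervalIntegral.integral_const_mul]
        rw [← Finset.mul_sum, sum_integral_gridCell hg.norm hM]

end Grid

/-- For a 2π-periodic function `h` with r-th derivative in L¹, the error of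
the trapezoidal rule (= left-endpoint rule, by periodicity) with M equidistant nodes
satisfies
`|(2π/M) Σ_{m=0}^{M-1} h(2πm/M) − ∫₀^{2π} h| ≤ C(r) M^{-r} ‖h^{(r)}‖_{L¹(0,2π)}`. -/
theorem trapezoidal_rule_periodic_error (r : ℕ) (hr : 1 ≤ r) :
    ∃ C > 0, ∀ M : ℕ, 1 ≤ M →
      ∀ h : ℝ → ℂ, ContDiff ℝ r h → (∀ s, h (s + 2 * Real.pi) = h s) →
        ‖(2 * Real.pi / M) * (∑ m ∈ Finset.range M, h (2 * Real.pi * m / M))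
            - ∫ s in (0 : ℝ)..(2 * Real.pi), h s‖
          ≤ C * (M : ℝ) ^ (-(r : ℝ)) *
              ∫ s in (0 : ℝ)..(2 * Real.pi), ‖iteratedDeriv r h s‖ := by
  obtain ⟨n, rfl⟩ : ∃ n, r = n + 1 := ⟨r - 1, by omega⟩
  obtain ⟨B, hB0, hB⟩ := (isCompact_Icc.image_of_continuousOn
    (continuous_peanoKernel n).continuousOn).isBounded.exists_pos_norm_le
  refine ⟨(2 * Real.pi) ^ (n + 1) * B, by positivity, fun M hM h hh hp => ?_⟩
  have hM0 : M ≠ 0 := by omega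
  have hsmul : ((2 * Real.pi / M : ℝ) : ℂ) * ∑ m ∈ Finset.range M, h (2 * Real.pi * m / M) =
      (2 * Real.pi / M) • ∑ m ∈ Finset.range M, h (gridNode (2 * Real.pi) M m) :=
    (Complex.real_smul ..).symm
  push_cast at hsmul
  rw [hsmul, leftRiemannSum_sub_integral_eq_peanoRemainder hp (by exact_mod_cast hh)
    Real.two_pi_pos.ne' hM0]
  refine (norm_peanoRemainder_le (hh.continuous_iteratedDeriv _ le_rfl) Real.two_pi_pos hM0
    fun y hy => hB _ (mem_image_of_mem _ hy)).trans_eq ?_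
  rw [div_pow, Real.rpow_neg (Nat.cast_nonneg M), Real.rpow_natCast]
  ring
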